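/- arXiv:1504.07671 — 2 statements merged into one kernel-verified Lean document; each statement's English description precedes it below -/
import Mathlib

section
/- For all natural numbers m, n, k, the balanced quantum binomials satisfy the q-Vandermonde identity [m+n choose k] = Σ_{j=0}^{k} q^{m(k-j) - nj}·[m choose j]·[n choose k-j] in ℚ(q), where terms with j > m or k-j > n are interpreted as 0. -/
open scoped BigOperators

noncomputable def q : RatFunc ℚ := RatFunc.X

noncomputable def qInt (k : ℕ) : RatFunc ℚ := (q ^ k - q⁻¹ ^ k) / (q - q⁻¹)

noncomputable def qFact (n : ℕ) : RatFunc ℚ := ∏ i ∈ Finset.range n, qInt (i + 1)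

noncomputable def qBinom (n k : ℕ) : RatFunc ℚ :=
  if k ≤ n then qFact n / (qFact (n - k) * qFact k) else 0

/-!
Induction on `m` using the q-Pascal rule `[n+1, k+1] = q^(k+1) [n, k+1] + q^(k-n) [n, k]`, which
comes from splitting `[n+1] = q^(k+1) [n-k] + q^(-(n-k)) [k+1]` in the factorial formula. That
formula needs the q-integers to be nonzero, which holds because `q` is not a root of unity.
-/

open Polynomial

lemma q_ne_zero : q ≠ 0 := RatFunc.X_ne_zero

lemma q_pow_sub_one_ne_zero {d : ℕ} (hd : 0 < d) : q ^ d - 1 ≠ 0 := by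
  have h : algebraMap ℚ[X] (RatFunc ℚ) (X ^ d - C 1) = q ^ d - 1 := by simp [q]
  rw [← h]
  exact (map_ne_zero_iff _ (RatFunc.algebraMap_injective ℚ)).2 (X_pow_sub_C_ne_zero hd 1)

lemma q_pow_sub_inv_pow_ne_zero {k : ℕ} (hk : 0 < k) : q ^ k - q⁻¹ ^ k ≠ 0 := by
  have h : q ^ k - q⁻¹ ^ k = q⁻¹ ^ k * (q ^ (2 * k) - 1) := by
    rw [mul_sub, two_mul, pow_add, ← mul_assoc, ← mul_pow, inv_mul_cancel₀ q_ne_zero]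
    ring
  rw [h]
  exact mul_ne_zero (pow_ne_zero _ (inv_ne_zero q_ne_zero)) (q_pow_sub_one_ne_zero (by omega))

lemma qInt_ne_zero {k : ℕ} (hk : 0 < k) : qInt k ≠ 0 :=
  div_ne_zero (q_pow_sub_inv_pow_ne_zero hk) (by simpa using q_pow_sub_inv_pow_ne_zero one_pos)

lemma qInt_add (x y : ℕ) : qInt (x + y) = q ^ y * qInt x + q⁻¹ ^ x * qInt y := by
  simp only [qInt, mul_div_assoc', ← add_div, pow_add]
  ring

lemma qFact_zero : qFact 0 = 1 := rfl

lemma qFact_succ (n : ℕ) : qFact (n + 1) = qFact n * qInt (n + 1) :=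
  Finset.prod_range_succ _ n

lemma qFact_ne_zero (n : ℕ) : qFact n ≠ 0 :=
  Finset.prod_ne_zero_iff.mpr fun i _ => qInt_ne_zero i.succ_pos

lemma qBinom_zero_right (n : ℕ) : qBinom n 0 = 1 := by
  simp [qBinom, qFact_zero, qFact_ne_zero]

lemma qBinom_self (n : ℕ) : qBinom n n = 1 := by
  simp [qBinom, qFact_zero, qFact_ne_zero]

lemma qBinom_of_lt {n k : ℕ} (h : n < k) : qBinom n k = 0 := by
  simp [qBinom, Nat.not_le.mpr h]

lemma qBinom_succ_succ (n k : ℕ) :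
    qBinom (n + 1) (k + 1) = q ^ ((k : ℤ) + 1) * qBinom n (k + 1) + q ^ ((k : ℤ) - n) * qBinom n k := by
  rcases lt_trichotomy k n with hlt | rfl | hgt
  · obtain ⟨r, rfl⟩ : ∃ r, n = k + 1 + r := ⟨n - (k + 1), by omega⟩
    have hexp₁ : q ^ ((k : ℤ) + 1) = q ^ (k + 1) := by norm_cast
    have hexp₂ : q ^ ((k : ℤ) - ((k + 1 + r : ℕ) : ℤ)) = q⁻¹ ^ (r + 1) := by
      rw [inv_pow, ← zpow_natCast, ← zpow_neg]
      congr 1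
      push_cast
      ring
    have hsplit : qInt (k + 1 + r + 1) = q ^ (k + 1) * qInt (r + 1) + q⁻¹ ^ (r + 1) * qInt (k + 1) := by
      rw [← qInt_add]
      congr 1
      ring
    simp only [qBinom, if_pos (by omega : k + 1 ≤ k + 1 + r + 1), if_pos (by omega : k + 1 ≤ k + 1 + r),
      if_pos (by omega : k ≤ k + 1 + r),
      show k + 1 + r + 1 - (k + 1) = r + 1 by omega, show k + 1 + r - (k + 1) = r by omega,
      show k + 1 + r - k = r + 1 by omega, hexp₁, hexp₂, qFact_succ, hsplit]
    field_simp [qFact_ne_zero, qInt_ne_zero]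
  · simp [qBinom_self, qBinom_of_lt]
  · simp [qBinom_of_lt, hgt, hgt.trans k.lt_succ_self]

lemma q_zpow_mul_zpow_eq {a b c d : ℤ} (h : a + b = c + d) : q ^ a * q ^ b = q ^ c * q ^ d := by
  rw [← zpow_add₀ q_ne_zero, ← zpow_add₀ q_ne_zero, h]

noncomputable def vandermondeTerm (m n k j : ℕ) : RatFunc ℚ :=
  q ^ ((m : ℤ) * ((k : ℤ) - (j : ℤ)) - (n : ℤ) * (j : ℤ)) * qBinom m j * qBinom n (k - j)

lemma sum_vandermondeTerm_zero_left (n k : ℕ) :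
    ∑ j ∈ Finset.range (k + 1), vandermondeTerm 0 n k j = qBinom n k := by
  rw [Finset.sum_eq_single_of_mem 0 (by simp)]
  · simp [vandermondeTerm, qBinom_zero_right]
  · intro j _ hj
    simp [vandermondeTerm, qBinom_of_lt (Nat.pos_of_ne_zero hj)]

lemma vandermondeTerm_succ_left_zero (m n k : ℕ) :
    vandermondeTerm (m + 1) n k 0 = q ^ (k : ℤ) * vandermondeTerm m n k 0 := by
  simp only [vandermondeTerm, qBinom_zero_right, Nat.cast_zero, mul_zero, sub_zero, mul_one]
  rw [← mul_assoc, ← zpow_add₀ q_ne_zero]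
  push_cast
  ring_nf

lemma vandermondeTerm_succ_left_succ (m n k i : ℕ) :
    vandermondeTerm (m + 1) n (k + 1) (i + 1) =
      q ^ ((k : ℤ) + 1) * vandermondeTerm m n (k + 1) (i + 1) +
        q ^ ((k : ℤ) - ((m + n : ℕ) : ℤ)) * vandermondeTerm m n k i := by
  have h₁ : q ^ (((m + 1 : ℕ) : ℤ) * ((k + 1 : ℕ) - (i + 1 : ℕ)) - n * (i + 1 : ℕ)) * q ^ ((i : ℤ) + 1) =
      q ^ ((k : ℤ) + 1) * q ^ ((m : ℤ) * ((k + 1 : ℕ) - (i + 1 : ℕ)) - n * (i + 1 : ℕ)) :=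
    q_zpow_mul_zpow_eq (by push_cast; ring)
  have h₂ : q ^ (((m + 1 : ℕ) : ℤ) * ((k + 1 : ℕ) - (i + 1 : ℕ)) - n * (i + 1 : ℕ)) * q ^ ((i : ℤ) - m) =
      q ^ ((k : ℤ) - ((m + n : ℕ) : ℤ)) * q ^ ((m : ℤ) * (k - i) - n * i) :=
    q_zpow_mul_zpow_eq (by push_cast; ring)
  simp only [vandermondeTerm, qBinom_succ_succ, Nat.add_sub_add_right]
  linear_combination (qBinom m (i + 1) * qBinom n (k - i)) * h₁ + (qBinom m i * qBinom n (k - i)) * h₂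

theorem qBinom_vandermonde (m n k : ℕ) :
    qBinom (m + n) k =
      ∑ j ∈ Finset.range (k + 1),
        q ^ ((m : ℤ) * ((k : ℤ) - (j : ℤ)) - (n : ℤ) * (j : ℤ)) *
          qBinom m j * qBinom n (k - j) := by
  change qBinom (m + n) k = ∑ j ∈ Finset.range (k + 1), vandermondeTerm m n k j
  induction m generalizing k with
  | zero => rw [zero_add, sum_vandermondeTerm_zero_left]
  | succ m ih =>
    cases k with
    | zero => simp [vandermondeTerm, qBinom_zero_right]
    | succ k =>
      calc qBinom (m + 1 + n) (k + 1)
          = q ^ ((k : ℤ) + 1) * qBinom (m + n) (k + 1) +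
              q ^ ((k : ℤ) - ((m + n : ℕ) : ℤ)) * qBinom (m + n) k := by
            rw [Nat.add_right_comm, qBinom_succ_succ]
        _ = ∑ i ∈ Finset.range (k + 1), (q ^ ((k : ℤ) + 1) * vandermondeTerm m n (k + 1) (i + 1) +
                q ^ ((k : ℤ) - ((m + n : ℕ) : ℤ)) * vandermondeTerm m n k i) +
              q ^ ((k : ℤ) + 1) * vandermondeTerm m n (k + 1) 0 := by
            rw [ih, ih, Finset.sum_range_succ', mul_add, Finset.mul_sum, Finset.mul_sum,
              Finset.sum_add_distrib]
            ring
        _ = ∑ j ∈ Finset.range (k + 2), vandermondeTerm (m + 1) n (k + 1) j := by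
            simp only [← vandermondeTerm_succ_left_succ, Finset.sum_range_succ' _ (k + 1),
              vandermondeTerm_succ_left_zero, Nat.cast_succ]
end

section
/- For all natural numbers k, l, m with 1 ≤ m ≤ min(k, l), the following identity of rational numbers holds: Σ_{t=0}^{m−1} (−1)^t · (C(l−m+t, t)/C(k+l−2m+t, l−m+t)) · ((k+l−2m+1)/(k+l−2m+1+t)) · C(l, l−m+t) · C(k+l−m+t, k) = (−1)^{m−1} · C(k+l, k) · (C(l, m)/C(k+l−m, l)) · ((k+l−2m+1)/(k+l−m+1)), where C(a,b) denotes the ordinary binomial coefficient. -/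
open scoped BigOperators
open Nat

private lemma fact_ne (x : ℕ) : ((x ! : ℕ) : ℚ) ≠ 0 := by
  exact_mod_cast x.factorial_ne_zero

/-- U-function: `U c m t = (-1)^t (c+m+t)! / (t! (m-t)! (c+t+1)!)`. -/
private def Uf (c m t : ℕ) : ℚ :=
  (-1 : ℚ) ^ t * ((c + m + t)! : ℚ) / ((t ! : ℕ) * ((m - t)! : ℕ) * ((c + t + 1)! : ℕ))

/-- The telescoping certificate identity. -/
private lemma cert (c m : ℕ) :
    ∀ n ≤ m, ∑ t ∈ Finset.range n, Uf c m t
      = -((n * (n + c + 1) : ℕ) : ℚ) / ((m * (c + m + 1) : ℕ) : ℚ) * Uf c m n := by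
  intro n
  induction n with
  | zero => intro _; simp
  | succ n ih =>
    intro hn1
    have hn : n ≤ m := le_of_lt hn1
    have IH := ih hn
    rw [Finset.sum_range_succ, IH]
    obtain ⟨d, rfl⟩ : ∃ d, m = n + 1 + d := ⟨m - (n + 1), by omega⟩
    have hmn : n + 1 + d - n = d + 1 := by omega
    have hmn1 : n + 1 + d - (n + 1) = d := by omega
    unfold Uf
    rw [hmn, hmn1]
    have e1 : (c + (n + 1 + d) + (n + 1))! = (c + (n + 1 + d) + n + 1) * (c + (n + 1 + d) + n)! := by
      have : c + (n + 1 + d) + (n + 1) = (c + (n + 1 + d) + n) + 1 := by ring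
      rw [this, Nat.factorial_succ]
    have e2 : (n + 1)! = (n + 1) * n ! := Nat.factorial_succ n
    have e3 : (d + 1)! = (d + 1) * d ! := Nat.factorial_succ d
    have e4 : (c + (n + 1) + 1)! = (c + n + 2) * (c + n + 1)! := by
      have : c + (n + 1) + 1 = (c + n + 1) + 1 := by ring
      rw [this, Nat.factorial_succ]
    have e5 : c + n + 1 = c + n + 1 := rfl
    push_cast [e1, e2, e3, e4, pow_succ]
    have h1 := fact_ne n
    have h2 := fact_ne d
    have h3 := fact_ne (c + n + 1)
    have h4 := fact_ne (c + (n + 1 + d) + n)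
    have h5 : ((n : ℚ) + 1) ≠ 0 := by positivity
    have h6 : ((d : ℚ) + 1) ≠ 0 := by positivity
    have h7 : ((c : ℚ) + n + 2) ≠ 0 := by positivity
    have h8 : ((n : ℚ) + 1 + d) ≠ 0 := by positivity
    have h9 : ((c : ℚ) + (n + 1 + d) + 1) ≠ 0 := by positivity
    field_simp
    ring

/-- Closed form for the summand. -/
private lemma summand_eq (a b m t : ℕ) (ht : t ≤ m) :
    (-1 : ℚ) ^ t *
        (((b + t).choose t : ℚ) / (((a + b + t).choose (b + t) : ℚ))) *
        (((a + b + 1 : ℕ) : ℚ) / ((a + b + 1 + t : ℕ) : ℚ)) *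
        (((m + b).choose (b + t) : ℚ)) * (((m + a + b + t).choose (m + a) : ℚ))
      = ((a ! : ℕ) * ((a : ℚ) + b + 1) * ((m + b)! : ℕ) / ((b ! : ℕ) * ((m + a)! : ℕ)))
          * Uf (a + b) m t := by
  obtain ⟨d, rfl⟩ : ∃ d, m = t + d := ⟨m - t, by omega⟩
  have c1 : ((b + t).choose t : ℚ) = (b + t)! / (t ! * b !) := by
    have h : b + t - t = b := by omega
    rw [Nat.cast_choose ℚ (by omega : t ≤ b + t), h]
  have c2 : ((a + b + t).choose (b + t) : ℚ) = (a + b + t)! / ((b + t)! * a !) := by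
    have h : a + b + t - (b + t) = a := by omega
    rw [Nat.cast_choose ℚ (by omega : b + t ≤ a + b + t), h]
  have c3 : (((t + d) + b).choose (b + t) : ℚ) = ((t + d) + b)! / ((b + t)! * d !) := by
    have h : (t + d) + b - (b + t) = d := by omega
    rw [Nat.cast_choose ℚ (by omega : b + t ≤ (t + d) + b), h]
  have c4 : (((t + d) + a + b + t).choose ((t + d) + a) : ℚ)
      = ((t + d) + a + b + t)! / (((t + d) + a)! * (b + t)!) := by
    have h : (t + d) + a + b + t - ((t + d) + a) = b + t := by omega
    rw [Nat.cast_choose ℚ (by omega : (t + d) + a ≤ (t + d) + a + b + t), h]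
  have hsub : t + d - t = d := by omega
  unfold Uf
  rw [c1, c2, c3, c4, hsub]
  have e1 : (a + b + 1 + t : ℕ) = (a + b + t) + 1 := by ring
  have e2 : (a + b + t + 1)! = (a + b + t + 1) * (a + b + t)! := Nat.factorial_succ _
  have e3 : (b + t)! ≥ 0 := by positivity
  have f1 := fact_ne t
  have f2 := fact_ne b
  have f3 := fact_ne a
  have f4 := fact_ne d
  have f5 := fact_ne (b + t)
  have f6 := fact_ne (a + b + t)
  have f7 := fact_ne ((t + d) + a)
  have f8 := fact_ne ((t + d) + b)
  have f9 := fact_ne ((t + d) + a + b + t)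
  have g1 : ((a : ℚ) + b + t + 1) ≠ 0 := by positivity
  have e4 : (a + b + (t + d) + t) = ((t + d) + a + b + t) := by ring
  rw [e1, e4]
  push_cast [e2]
  field_simp

theorem final_coefficient_q_one (k l m : ℕ) (hm : 1 ≤ m) (hmk : m ≤ k) (hml : m ≤ l) :
    ∑ t ∈ Finset.range m,
      (-1 : ℚ) ^ t *
        (((l - m + t).choose t : ℚ) / ((k + l - 2 * m + t).choose (l - m + t) : ℚ)) *
        (((k + l - 2 * m + 1 : ℕ) : ℚ) / ((k + l - 2 * m + 1 + t : ℕ) : ℚ)) *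
        ((l.choose (l - m + t) : ℚ)) * (((k + l - m + t).choose k : ℚ)) =
      (-1 : ℚ) ^ (m - 1) * (((k + l).choose k : ℚ)) *
        ((l.choose m : ℚ) / ((k + l - m).choose l : ℚ)) *
        (((k + l - 2 * m + 1 : ℕ) : ℚ) / ((k + l - m + 1 : ℕ) : ℚ)) := by
  obtain ⟨a, rfl⟩ : ∃ a, k = m + a := ⟨k - m, by omega⟩
  obtain ⟨b, rfl⟩ : ∃ b, l = m + b := ⟨l - m, by omega⟩
  -- rewrite the sum using summand_eq
  have hsum : ∑ t ∈ Finset.range m,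
      (-1 : ℚ) ^ t *
        ((((m + b) - m + t).choose t : ℚ) / (((m + a) + (m + b) - 2 * m + t).choose ((m + b) - m + t) : ℚ)) *
        ((((m + a) + (m + b) - 2 * m + 1 : ℕ) : ℚ) / (((m + a) + (m + b) - 2 * m + 1 + t : ℕ) : ℚ)) *
        (((m + b).choose ((m + b) - m + t) : ℚ)) * ((((m + a) + (m + b) - m + t).choose (m + a) : ℚ))
      = ((a ! : ℕ) * ((a : ℚ) + b + 1) * ((m + b)! : ℕ) / ((b ! : ℕ) * ((m + a)! : ℕ)))
          * ∑ t ∈ Finset.range m, Uf (a + b) m t := by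
    rw [Finset.mul_sum]
    apply Finset.sum_congr rfl
    intro t ht
    have ht' : t ≤ m := le_of_lt (Finset.mem_range.mp ht)
    have r1 : (m + b) - m + t = b + t := by omega
    have r2 : (m + a) + (m + b) - 2 * m + t = a + b + t := by omega
    have r3 : ((m + a) + (m + b) - 2 * m + 1 : ℕ) = (a + b + 1 : ℕ) := by omega
    have r4 : ((m + a) + (m + b) - 2 * m + 1 + t : ℕ) = (a + b + 1 + t : ℕ) := by omega
    have r5 : (m + a) + (m + b) - m + t = m + a + b + t := by omega
    rw [r1, r2, r4, r3, r5]
    exact summand_eq a b m t ht'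
  rw [hsum, cert (a + b) m m le_rfl]
  -- the coefficient -(m*(m+c+1))/(m*(c+m+1)) = -1
  have hmne : ((m * (a + b + m + 1) : ℕ) : ℚ) ≠ 0 := by
    have : 0 < m * (a + b + m + 1) := by positivity
    exact_mod_cast this.ne'
  have hcoef : -((m * (m + (a + b) + 1) : ℕ) : ℚ) / ((m * ((a + b) + m + 1) : ℕ) : ℚ) = -1 := by
    have : (m * (m + (a + b) + 1) : ℕ) = (m * ((a + b) + m + 1) : ℕ) := by ring
    rw [this]
    rw [neg_div]
    rw [div_self (by exact_mod_cast (by positivity : 0 < m * ((a + b) + m + 1)).ne')]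
  rw [hcoef]
  -- now compute RHS
  obtain ⟨m', rfl⟩ : ∃ m', m = m' + 1 := ⟨m - 1, by omega⟩
  have rr1 : (m' + 1 + a) + (m' + 1 + b) - 2 * (m' + 1) + 1 = a + b + 1 := by omega
  have rr2 : (m' + 1 + a) + (m' + 1 + b) - (m' + 1) = m' + 1 + a + b := by omega
  have rr3 : (m' + 1 + a) + (m' + 1 + b) - (m' + 1) + 1 = m' + 1 + a + b + 1 := by omega
  have rr4 : m' + 1 - 1 = m' := by omega
  rw [rr1, rr3, rr2, rr4]
  set M := m' + 1 with hM
  -- Uf at t = M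
  have hUm : Uf (a + b) M M = (-1 : ℚ) ^ M * ((a + b + 2 * M)! : ℚ) / ((M ! : ℕ) * ((a + b + M + 1)! : ℕ)) := by
    unfold Uf
    have : M - M = 0 := by omega
    rw [this]
    have : a + b + M + M = a + b + 2 * M := by ring
    rw [this]
    have : a + b + M + 1 = a + b + M + 1 := rfl
    simp [Nat.factorial_zero]
  rw [hUm]
  -- cast all choices on RHS
  have d1 : (((M + a) + (M + b)).choose (M + a) : ℚ)
      = ((M + a) + (M + b))! / ((M + a)! * (M + b)!) := by
    have h : (M + a) + (M + b) - (M + a) = M + b := by omega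
    rw [Nat.cast_choose ℚ (by omega : M + a ≤ (M + a) + (M + b)), h]
  have d2 : ((M + b).choose M : ℚ) = (M + b)! / (M ! * b !) := by
    have h : M + b - M = b := by omega
    rw [Nat.cast_choose ℚ (by omega : M ≤ M + b), h]
  have d3 : ((M + a + b).choose (M + b) : ℚ) = (M + a + b)! / ((M + b)! * a !) := by
    have h : M + a + b - (M + b) = a := by omega
    rw [Nat.cast_choose ℚ (by omega : M + b ≤ M + a + b), h]
  rw [d1, d2, d3]
  have hMa : ((M + a) + (M + b)) = a + b + 2 * M := by ring
  rw [hMa]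
  have e6 : (a + b + M + 1)! = (a + b + M + 1) * (a + b + M)! := Nat.factorial_succ _
  have e7 : (M + a + b) = a + b + M := by ring
  rw [e7]
  have hpow : (-1 : ℚ) ^ M = -(-1 : ℚ) ^ m' := by
    rw [hM, pow_succ]
    ring
  rw [hpow]
  push_cast [e6]
  have f1 := fact_ne M
  have f2 := fact_ne a
  have f3 := fact_ne b
  have f4 := fact_ne (M + a)
  have f5 := fact_ne (M + b)
  have f6 := fact_ne (a + b + M)
  have f7 := fact_ne (a + b + 2 * M)
  have g1 : ((a : ℚ) + b + M + 1) ≠ 0 := by positivity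
  have g2 : ((M : ℚ) + a + b + 1) ≠ 0 := by positivity
  field_simp
end
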